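/- Under the setting of the group-aware posterior odds factorization, for points x₀, x₁ and groups g₀, g₁ (with all relevant probabilities strictly between 0 and 1), ρ̄(x₁,g₁) > ρ̄(x₀,g₀) if and only if τ_r(x₁,x₀) > ω(g₀,π(x₀),g₁,π(x₁)), where τ_r(x₁,x₀) = r(x₁)/r(x₀) and ω(g,k,h,j) = OR(α^g_k, α_k)/OR(α^h_j, α_j). Likewise, ρ̄(x₁,g₁) = ρ̄(x₀,g₀) if and only if τ_r(x₁,x₀) = ω(g₀,π(x₀),g₁,π(x₁)). -/

import Mathlib

open scoped Classical

/-- Probability of an event under a mass function on `X × G × Bool`. -/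
noncomputable def prb {X G : Type*} [Fintype X] [Fintype G]
    (p : X × G × Bool → ℝ) (A : X × G × Bool → Prop) : ℝ :=
  ∑ z : X × G × Bool, if A z then p z else 0

/-- Conditional probability `p(A | B)`. -/
noncomputable def cnd {X G : Type*} [Fintype X] [Fintype G]
    (p : X × G × Bool → ℝ) (A B : X × G × Bool → Prop) : ℝ :=
  prb p (fun z => A z ∧ B z) / prb p B

/-- The odds ratio between probabilities `p` and `q`. -/
noncomputable def OR (p q : ℝ) : ℝ := (p / (1 - p)) / (q / (1 - q))

/-!
PCC-invariance rewrites the joint mass p(x, y, g) as p(x, y) · p(y, g, k) / p(y, k) with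
k = π x, so the posterior odds factor as odds ρ̄(x,g) = r(x) · (p(y=1)/p(y=0)) · OR(α^g_k, α_k).
Since `q ↦ q/(1-q)` is strictly increasing below 1, comparing two posteriors amounts to comparing
these products, in which the prior odds cancel.
-/

open Set

noncomputable def odds (q : ℝ) : ℝ := q / (1 - q)

lemma OR_eq_odds_div_odds (p q : ℝ) : OR p q = odds p / odds q := rfl

lemma odds_pos_iff {q : ℝ} : 0 < odds q ↔ q ∈ Ioo 0 1 := by
  rw [odds, div_pos_iff, mem_Ioo, sub_pos, sub_neg]
  constructor
  · rintro (h | ⟨hq, h1⟩)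
    · exact h
    · linarith
  · exact Or.inl

lemma strictMonoOn_odds : StrictMonoOn odds (Iio 1) := by
  intro a ha b hb hab
  rw [mem_Iio] at ha hb
  rw [odds, odds, div_lt_div_iff₀ (sub_pos.2 ha) (sub_pos.2 hb)]
  nlinarith

-- Junk division makes this hold also when `a + b = 0`.
lemma odds_div_add {a b : ℝ} (ha : 0 ≤ a) (hb : 0 ≤ b) : odds (a / (a + b)) = a / b := by
  rcases (add_nonneg ha hb).eq_or_lt' with hab | hab
  · obtain ⟨rfl, rfl⟩ : a = 0 ∧ b = 0 := ⟨by linarith, by linarith⟩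
    simp [odds]
  · rw [odds, one_sub_div hab.ne', add_sub_cancel_left, div_div_div_cancel_right₀ hab.ne']

lemma posterior_ranking_of_odds_eq {ρ₀ ρ₁ r₀ r₁ c o₀ o₁ : ℝ}
    (h₀ : odds ρ₀ = r₀ * c * o₀) (h₁ : odds ρ₁ = r₁ * c * o₁)
    (hr₀ : 0 < r₀) (hr₁ : 0 < r₁) (hc : 0 < c) (ho₀ : 0 < o₀) (ho₁ : 0 < o₁) :
    (ρ₁ > ρ₀ ↔ r₁ / r₀ > o₀ / o₁) ∧ (ρ₁ = ρ₀ ↔ r₁ / r₀ = o₀ / o₁) := by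
  have hρ₀ : ρ₀ ∈ Iio 1 := (odds_pos_iff.1 (by rw [h₀]; positivity)).2
  have hρ₁ : ρ₁ ∈ Iio 1 := (odds_pos_iff.1 (by rw [h₁]; positivity)).2
  rw [gt_iff_lt, gt_iff_lt, ← strictMonoOn_odds.lt_iff_lt hρ₀ hρ₁,
    ← strictMonoOn_odds.eq_iff_eq hρ₁ hρ₀, h₀, h₁, div_lt_div_iff₀ ho₁ hr₀,
    div_eq_div_iff hr₀.ne' ho₁.ne', show r₀ * c * o₀ = c * (o₀ * r₀) by ring,
    show r₁ * c * o₁ = c * (r₁ * o₁) by ring]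
  exact ⟨mul_lt_mul_iff_of_pos_left hc, mul_left_cancel_iff_of_pos hc⟩

section Probability

variable {X G : Type*} [Fintype X] [Fintype G] {p : X × G × Bool → ℝ}

lemma prb_nonneg (hnn : ∀ z, 0 ≤ p z) (A : X × G × Bool → Prop) : 0 ≤ prb p A :=
  Finset.sum_nonneg fun z _ => by split_ifs <;> simp [hnn z]

lemma prb_mono (hnn : ∀ z, 0 ≤ p z) {A B : X × G × Bool → Prop} (h : ∀ z, A z → B z) :
    prb p A ≤ prb p B :=
  Finset.sum_le_sum fun z _ => by
    by_cases hA : A z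
    · simp [hA, h z hA]
    · by_cases hB : B z <;> simp [hA, hB, hnn z]

lemma prb_congr {A B : X × G × Bool → Prop} (h : ∀ z, A z ↔ B z) : prb p A = prb p B := by
  rw [funext fun z => propext (h z)]

lemma prb_eq_add (B : X × G × Bool → Prop) :
    prb p B = prb p (fun z => z.2.2 = true ∧ B z) + prb p (fun z => z.2.2 = false ∧ B z) := by
  simp only [prb, ← Finset.sum_add_distrib]
  refine Finset.sum_congr rfl fun z _ => ?_
  rcases Bool.eq_false_or_eq_true z.2.2 with h | h <;> simp [h]

lemma odds_cnd_true (hnn : ∀ z, 0 ≤ p z) (B : X × G × Bool → Prop) :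
    odds (cnd p (fun z => z.2.2 = true) B)
      = prb p (fun z => z.2.2 = true ∧ B z) / prb p (fun z => z.2.2 = false ∧ B z) := by
  rw [cnd, prb_eq_add B, odds_div_add (prb_nonneg hnn _) (prb_nonneg hnn _)]

lemma cnd_true_mem_Ioo_iff (hnn : ∀ z, 0 ≤ p z) (B : X × G × Bool → Prop) :
    cnd p (fun z => z.2.2 = true) B ∈ Ioo 0 1
      ↔ 0 < prb p (fun z => z.2.2 = true ∧ B z) ∧ 0 < prb p (fun z => z.2.2 = false ∧ B z) := by
  rw [← odds_pos_iff, odds_cnd_true hnn]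
  exact ⟨fun h => (div_pos_iff.1 h).resolve_right fun h' => (prb_nonneg hnn _).not_gt h'.1,
    fun h => div_pos h.1 h.2⟩

lemma cnd_true_mem_Ioo_of_imp (hnn : ∀ z, 0 ≤ p z) {A B : X × G × Bool → Prop}
    (hAB : ∀ z, A z → B z) (hA : cnd p (fun z => z.2.2 = true) A ∈ Ioo 0 1) :
    cnd p (fun z => z.2.2 = true) B ∈ Ioo 0 1 := by
  rw [cnd_true_mem_Ioo_iff hnn] at hA ⊢
  exact ⟨hA.1.trans_le (prb_mono hnn fun z h => ⟨h.1, hAB z h.2⟩),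
    hA.2.trans_le (prb_mono hnn fun z h => ⟨h.1, hAB z h.2⟩)⟩

lemma prb_label_pos (hnn : ∀ z, 0 ≤ p z) {B : X × G × Bool → Prop}
    (hB : cnd p (fun z => z.2.2 = true) B ∈ Ioo 0 1) :
    0 < prb p (fun z => z.2.2 = true) ∧ 0 < prb p (fun z => z.2.2 = false) := by
  rw [cnd_true_mem_Ioo_iff hnn] at hB
  exact ⟨hB.1.trans_le (prb_mono hnn fun _ => And.left),
    hB.2.trans_le (prb_mono hnn fun _ => And.left)⟩

variable {P : Type*}

def PCCInvariant (π : X → P) (p : X × G × Bool → ℝ) : Prop :=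
  ∀ (x : X) (y : Bool) (g : G),
    0 < prb p (fun z => z.2.2 = y ∧ z.2.1 = g ∧ π z.1 = π x) →
    cnd p (fun z => z.1 = x) (fun z => z.2.2 = y ∧ z.2.1 = g ∧ π z.1 = π x)
      = cnd p (fun z => z.1 = x) (fun z => z.2.2 = y ∧ π z.1 = π x)

lemma prb_label_point_group_eq {π : X → P} (hpcc : PCCInvariant π p) (x : X) (y : Bool) (g : G)
    (hgk : 0 < prb p (fun z => z.2.2 = y ∧ z.2.1 = g ∧ π z.1 = π x))
    (hk : 0 < prb p (fun z => z.2.2 = y ∧ π z.1 = π x)) :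
    prb p (fun z => z.2.2 = y ∧ z.1 = x ∧ z.2.1 = g)
      = prb p (fun z => z.1 = x ∧ z.2.2 = y) * prb p (fun z => z.2.2 = y ∧ z.2.1 = g ∧ π z.1 = π x)
        / prb p (fun z => z.2.2 = y ∧ π z.1 = π x) := by
  have hxgk : prb p (fun z => z.1 = x ∧ z.2.2 = y ∧ z.2.1 = g ∧ π z.1 = π x)
      = prb p (fun z => z.2.2 = y ∧ z.1 = x ∧ z.2.1 = g) :=
    prb_congr fun z => ⟨fun ⟨hx, hy, hg, _⟩ => ⟨hy, hx, hg⟩,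
      fun ⟨hy, hx, hg⟩ => ⟨hx, hy, hg, congrArg π hx⟩⟩
  have hxk : prb p (fun z => z.1 = x ∧ z.2.2 = y ∧ π z.1 = π x)
      = prb p (fun z => z.1 = x ∧ z.2.2 = y) :=
    prb_congr fun z => ⟨fun ⟨hx, hy, _⟩ => ⟨hx, hy⟩, fun ⟨hx, hy⟩ => ⟨hx, hy, congrArg π hx⟩⟩
  have h := hpcc x y g hgk
  rw [cnd, cnd, hxgk, hxk, div_eq_div_iff hgk.ne' hk.ne'] at h
  rw [eq_div_iff hk.ne', h]

end Probability

section Posterior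

variable {X G P : Type*} [Fintype X] [Fintype G]

-- `posterior p x g` is ρ̄(x,g), `densityRatio p x` is r(x), and `groupOddsRatio π p g x` is
-- OR(α^g_k, α_k) at k = π x.
noncomputable def posterior (p : X × G × Bool → ℝ) (x : X) (g : G) : ℝ :=
  cnd p (fun z => z.2.2 = true) (fun z => z.1 = x ∧ z.2.1 = g)

noncomputable def densityRatio (p : X × G × Bool → ℝ) (x : X) : ℝ :=
  cnd p (fun z => z.1 = x) (fun z => z.2.2 = true)
    / cnd p (fun z => z.1 = x) (fun z => z.2.2 = false)

noncomputable def priorOdds (p : X × G × Bool → ℝ) : ℝ :=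
  prb p (fun z => z.2.2 = true) / prb p (fun z => z.2.2 = false)

noncomputable def groupOddsRatio (π : X → P) (p : X × G × Bool → ℝ) (g : G) (x : X) : ℝ :=
  OR (cnd p (fun z => z.2.2 = true) (fun z => z.2.1 = g ∧ π z.1 = π x))
    (cnd p (fun z => z.2.2 = true) (fun z => π z.1 = π x))

variable {π : X → P} {p : X × G × Bool → ℝ}

lemma priorOdds_pos (hnn : ∀ z, 0 ≤ p z) {B : X × G × Bool → Prop}
    (hB : cnd p (fun z => z.2.2 = true) B ∈ Ioo 0 1) : 0 < priorOdds p :=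
  div_pos (prb_label_pos hnn hB).1 (prb_label_pos hnn hB).2

lemma groupOddsRatio_pos (hnn : ∀ z, 0 ≤ p z) {g : G} {x : X}
    (hα : cnd p (fun z => z.2.2 = true) (fun z => z.2.1 = g ∧ π z.1 = π x) ∈ Ioo 0 1) :
    0 < groupOddsRatio π p g x :=
  div_pos (odds_pos_iff.2 hα) (odds_pos_iff.2 (cnd_true_mem_Ioo_of_imp hnn (fun _ => And.right) hα))

theorem odds_posterior_eq (hnn : ∀ z, 0 ≤ p z) (hpcc : PCCInvariant π p) {x : X} {g : G}
    (hα : cnd p (fun z => z.2.2 = true) (fun z => z.2.1 = g ∧ π z.1 = π x) ∈ Ioo 0 1) :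
    odds (posterior p x g) = densityRatio p x * priorOdds p * groupOddsRatio π p g x := by
  obtain ⟨h1gk, h0gk⟩ := (cnd_true_mem_Ioo_iff hnn _).1 hα
  obtain ⟨h1k, h0k⟩ :=
    (cnd_true_mem_Ioo_iff hnn _).1 (cnd_true_mem_Ioo_of_imp hnn (fun _ => And.right) hα)
  obtain ⟨h1, h0⟩ := prb_label_pos hnn hα
  rw [posterior, odds_cnd_true hnn, prb_label_point_group_eq hpcc x true g h1gk h1k,
    prb_label_point_group_eq hpcc x false g h0gk h0k, groupOddsRatio, OR_eq_odds_div_odds,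
    odds_cnd_true hnn, odds_cnd_true hnn, densityRatio, priorOdds, cnd, cnd]
  field_simp

end Posterior

theorem group_aware_posterior_ranking_general {X G P : Type*}
    [Fintype X] [Fintype G] (π : X → P)
    (p : X × G × Bool → ℝ) (hnn : ∀ z, 0 ≤ p z)
    (hpcc : ∀ (x : X) (y : Bool) (g : G),
      0 < prb p (fun z => z.2.2 = y ∧ z.2.1 = g ∧ π z.1 = π x) →
      cnd p (fun z => z.1 = x) (fun z => z.2.2 = y ∧ z.2.1 = g ∧ π z.1 = π x)
        = cnd p (fun z => z.1 = x) (fun z => z.2.2 = y ∧ π z.1 = π x))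
    (x₀ x₁ : X) (g₀ g₁ : G)
    (hαgk₀ : cnd p (fun z => z.2.2 = true) (fun z => z.2.1 = g₀ ∧ π z.1 = π x₀)
      ∈ Set.Ioo (0:ℝ) 1)
    (hαgk₁ : cnd p (fun z => z.2.2 = true) (fun z => z.2.1 = g₁ ∧ π z.1 = π x₁)
      ∈ Set.Ioo (0:ℝ) 1)
    (hfp₀ : 0 < cnd p (fun z => z.1 = x₀) (fun z => z.2.2 = true))
    (hfm₀ : 0 < cnd p (fun z => z.1 = x₀) (fun z => z.2.2 = false))
    (hfp₁ : 0 < cnd p (fun z => z.1 = x₁) (fun z => z.2.2 = true))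
    (hfm₁ : 0 < cnd p (fun z => z.1 = x₁) (fun z => z.2.2 = false)) :
    (cnd p (fun z => z.2.2 = true) (fun z => z.1 = x₁ ∧ z.2.1 = g₁)
        > cnd p (fun z => z.2.2 = true) (fun z => z.1 = x₀ ∧ z.2.1 = g₀)
      ↔ (cnd p (fun z => z.1 = x₁) (fun z => z.2.2 = true)
            / cnd p (fun z => z.1 = x₁) (fun z => z.2.2 = false))
          / (cnd p (fun z => z.1 = x₀) (fun z => z.2.2 = true)
            / cnd p (fun z => z.1 = x₀) (fun z => z.2.2 = false))
        > OR (cnd p (fun z => z.2.2 = true) (fun z => z.2.1 = g₀ ∧ π z.1 = π x₀))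
             (cnd p (fun z => z.2.2 = true) (fun z => π z.1 = π x₀))
          / OR (cnd p (fun z => z.2.2 = true) (fun z => z.2.1 = g₁ ∧ π z.1 = π x₁))
               (cnd p (fun z => z.2.2 = true) (fun z => π z.1 = π x₁)))
    ∧ (cnd p (fun z => z.2.2 = true) (fun z => z.1 = x₁ ∧ z.2.1 = g₁)
        = cnd p (fun z => z.2.2 = true) (fun z => z.1 = x₀ ∧ z.2.1 = g₀)
      ↔ (cnd p (fun z => z.1 = x₁) (fun z => z.2.2 = true)
            / cnd p (fun z => z.1 = x₁) (fun z => z.2.2 = false))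
          / (cnd p (fun z => z.1 = x₀) (fun z => z.2.2 = true)
            / cnd p (fun z => z.1 = x₀) (fun z => z.2.2 = false))
        = OR (cnd p (fun z => z.2.2 = true) (fun z => z.2.1 = g₀ ∧ π z.1 = π x₀))
             (cnd p (fun z => z.2.2 = true) (fun z => π z.1 = π x₀))
          / OR (cnd p (fun z => z.2.2 = true) (fun z => z.2.1 = g₁ ∧ π z.1 = π x₁))
               (cnd p (fun z => z.2.2 = true) (fun z => π z.1 = π x₁))) :=
  posterior_ranking_of_odds_eq (odds_posterior_eq hnn hpcc hαgk₀)
    (odds_posterior_eq hnn hpcc hαgk₁) (div_pos hfp₀ hfm₀) (div_pos hfp₁ hfm₁)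
    (priorOdds_pos hnn hαgk₀) (groupOddsRatio_pos hnn hαgk₀) (groupOddsRatio_pos hnn hαgk₁)

/-- Under PCC-invariance, the group-aware posterior ranks `(x₁,g₁)` above `(x₀,g₀)` iff
the density ratio gap `τ_r(x₁,x₀)` exceeds the odds-ratio gap `ω(g₀,π(x₀),g₁,π(x₁))`,
with equality characterizing ties. -/
theorem group_aware_posterior_ranking {X G P : Type*}
    [Fintype X] [Fintype G] (π : X → P)
    (p : X × G × Bool → ℝ) (hnn : ∀ z, 0 ≤ p z) (hsum : ∑ z, p z = 1)
    (hpcc : ∀ (x : X) (y : Bool) (g : G),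
      0 < prb p (fun z => z.2.2 = y ∧ z.2.1 = g ∧ π z.1 = π x) →
      cnd p (fun z => z.1 = x) (fun z => z.2.2 = y ∧ z.2.1 = g ∧ π z.1 = π x)
        = cnd p (fun z => z.1 = x) (fun z => z.2.2 = y ∧ π z.1 = π x))
    (x₀ x₁ : X) (g₀ g₁ : G)
    (hxg₀ : 0 < prb p (fun z => z.1 = x₀ ∧ z.2.1 = g₀))
    (hxg₁ : 0 < prb p (fun z => z.1 = x₁ ∧ z.2.1 = g₁))
    (hαk₀ : cnd p (fun z => z.2.2 = true) (fun z => π z.1 = π x₀) ∈ Set.Ioo (0:ℝ) 1)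
    (hαk₁ : cnd p (fun z => z.2.2 = true) (fun z => π z.1 = π x₁) ∈ Set.Ioo (0:ℝ) 1)
    (hαgk₀ : cnd p (fun z => z.2.2 = true) (fun z => z.2.1 = g₀ ∧ π z.1 = π x₀)
      ∈ Set.Ioo (0:ℝ) 1)
    (hαgk₁ : cnd p (fun z => z.2.2 = true) (fun z => z.2.1 = g₁ ∧ π z.1 = π x₁)
      ∈ Set.Ioo (0:ℝ) 1)
    (hfp₀ : 0 < cnd p (fun z => z.1 = x₀) (fun z => z.2.2 = true))
    (hfm₀ : 0 < cnd p (fun z => z.1 = x₀) (fun z => z.2.2 = false))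
    (hfp₁ : 0 < cnd p (fun z => z.1 = x₁) (fun z => z.2.2 = true))
    (hfm₁ : 0 < cnd p (fun z => z.1 = x₁) (fun z => z.2.2 = false)) :
    (cnd p (fun z => z.2.2 = true) (fun z => z.1 = x₁ ∧ z.2.1 = g₁)
        > cnd p (fun z => z.2.2 = true) (fun z => z.1 = x₀ ∧ z.2.1 = g₀)
      ↔ (cnd p (fun z => z.1 = x₁) (fun z => z.2.2 = true)
            / cnd p (fun z => z.1 = x₁) (fun z => z.2.2 = false))
          / (cnd p (fun z => z.1 = x₀) (fun z => z.2.2 = true)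
            / cnd p (fun z => z.1 = x₀) (fun z => z.2.2 = false))
        > OR (cnd p (fun z => z.2.2 = true) (fun z => z.2.1 = g₀ ∧ π z.1 = π x₀))
             (cnd p (fun z => z.2.2 = true) (fun z => π z.1 = π x₀))
          / OR (cnd p (fun z => z.2.2 = true) (fun z => z.2.1 = g₁ ∧ π z.1 = π x₁))
               (cnd p (fun z => z.2.2 = true) (fun z => π z.1 = π x₁)))
    ∧ (cnd p (fun z => z.2.2 = true) (fun z => z.1 = x₁ ∧ z.2.1 = g₁)
        = cnd p (fun z => z.2.2 = true) (fun z => z.1 = x₀ ∧ z.2.1 = g₀)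
      ↔ (cnd p (fun z => z.1 = x₁) (fun z => z.2.2 = true)
            / cnd p (fun z => z.1 = x₁) (fun z => z.2.2 = false))
          / (cnd p (fun z => z.1 = x₀) (fun z => z.2.2 = true)
            / cnd p (fun z => z.1 = x₀) (fun z => z.2.2 = false))
        = OR (cnd p (fun z => z.2.2 = true) (fun z => z.2.1 = g₀ ∧ π z.1 = π x₀))
             (cnd p (fun z => z.2.2 = true) (fun z => π z.1 = π x₀))
          / OR (cnd p (fun z => z.2.2 = true) (fun z => z.2.1 = g₁ ∧ π z.1 = π x₁))
               (cnd p (fun z => z.2.2 = true) (fun z => π z.1 = π x₁))) :=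
  group_aware_posterior_ranking_general π p hnn hpcc x₀ x₁ g₀ g₁ hαgk₀ hαgk₁ hfp₀ hfm₀ hfp₁ hfm₁
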